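/- arXiv:2401.07267 — 4 statements merged into one kernel-verified Lean document; each statement's English description precedes it below -/
import Mathlib

section
/- Let λ > 0, μ ≥ 0, and let p: ℝ → ℝ be μ-amenable with parameter λ. Then for every dimension d and every vector β ∈ ℝ^d, λ‖β‖₁ ≤ Σ_{j=1}^d p(β_j) + (μ/2)‖β‖₂², where ‖β‖₁ = Σ_j |β_j| and ‖β‖₂ is the Euclidean norm. -/
/-!
The function `g t = p t + (μ/2) t²` is convex with `g 0 = 0`, and its right derivative at `0`
is `λ`: `p` is continuous (a convex function minus a quadratic) and `p' → λ` at `0⁺`. A convex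
function lies above its right tangent line, so `λ t ≤ g t` for `t ≥ 0`; evenness of `p` gives
`λ |t| ≤ g t` for all `t`, and summing over the coordinates of `β` gives the bound.
-/

/-- A scalar penalty `p` is `μ`-amenable with parameter `λ > 0`:
(i) even with `p 0 = 0`; (ii) nondecreasing on `[0,∞)`; (iii) `t ↦ p t / t`
nonincreasing on `(0,∞)`; (iv) differentiable away from `0`;
(v) `p' t → λ` as `t → 0⁺`; (vi) `t ↦ p t + (μ/2) t²` convex. -/
def IsAmenable (lam mu : ℝ) (p : ℝ → ℝ) : Prop :=
  (∀ t : ℝ, p (-t) = p t) ∧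
  p 0 = 0 ∧
  MonotoneOn p (Set.Ici 0) ∧
  AntitoneOn (fun t => p t / t) (Set.Ioi 0) ∧
  (∀ t : ℝ, t ≠ 0 → DifferentiableAt ℝ p t) ∧
  Filter.Tendsto (fun t => deriv p t) (nhdsWithin 0 (Set.Ioi 0)) (nhds lam) ∧
  ConvexOn ℝ Set.univ (fun t => p t + mu / 2 * t ^ 2)

open Set

namespace IsAmenable

variable {lam mu : ℝ} {p : ℝ → ℝ}

theorem continuous (hp : IsAmenable lam mu p) : Continuous p := by
  obtain ⟨-, -, -, -, -, -, hconv⟩ := hp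
  have hg : Continuous fun t => p t + mu / 2 * t ^ 2 :=
    continuousOn_univ.mp (hconv.continuousOn isOpen_univ)
  exact (hg.sub (by fun_prop : Continuous fun t : ℝ => mu / 2 * t ^ 2)).congr fun t =>
    add_sub_cancel_right _ _

theorem hasDerivWithinAt_Ici_zero (hp : IsAmenable lam mu p) :
    HasDerivWithinAt p lam (Ici 0) 0 := by
  have hcont := hp.continuous
  obtain ⟨-, -, -, -, hdiff, hderiv, -⟩ := hp
  exact hasDerivWithinAt_Ici_of_tendsto_deriv
    (fun t ht => (hdiff t (ne_of_gt ht)).differentiableWithinAt)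
    hcont.continuousWithinAt self_mem_nhdsWithin hderiv

theorem mul_le_add_sq_of_nonneg (hp : IsAmenable lam mu p) {t : ℝ} (ht : 0 ≤ t) :
    lam * t ≤ p t + mu / 2 * t ^ 2 := by
  have hderiv := hp.hasDerivWithinAt_Ici_zero
  obtain ⟨-, hp0, -, -, -, -, hconv⟩ := hp
  rcases ht.eq_or_lt with rfl | ht
  · simp [hp0]
  have hq : HasDerivAt (fun t : ℝ => mu / 2 * t ^ 2) 0 0 := by
    simpa using (hasDerivAt_pow 2 (0 : ℝ)).const_mul (mu / 2)
  have hg : HasDerivWithinAt (fun t => p t + mu / 2 * t ^ 2) (lam + 0) (Ioi 0) 0 :=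
    (hderiv.mono Ioi_subset_Ici_self).fun_add hq.hasDerivWithinAt
  have hslope := hconv.le_slope_of_hasDerivWithinAt_Ioi trivial trivial ht hg
  rw [slope_def_field, le_div_iff₀ (by simpa using ht)] at hslope
  simpa [hp0] using hslope

theorem mul_abs_le (hp : IsAmenable lam mu p) (t : ℝ) :
    lam * |t| ≤ p t + mu / 2 * t ^ 2 := by
  rcases le_total 0 t with ht | ht
  · simpa [abs_of_nonneg ht] using hp.mul_le_add_sq_of_nonneg ht
  · simpa [abs_of_nonpos ht, hp.1] using hp.mul_le_add_sq_of_nonneg (neg_nonneg.mpr ht)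

end IsAmenable

theorem amenable_l1_bound_general (lam mu : ℝ)
    (p : ℝ → ℝ) (hp : IsAmenable lam mu p) (d : ℕ) (β : Fin d → ℝ) :
    lam * (∑ j, |β j|) ≤ (∑ j, p (β j)) + mu / 2 * (∑ j, (β j) ^ 2) := by
  rw [Finset.mul_sum, Finset.mul_sum, ← Finset.sum_add_distrib]
  exact Finset.sum_le_sum fun j _ => hp.mul_abs_le (β j)

/-- For a `μ`-amenable penalty `p` with parameter `λ`,
`λ‖β‖₁ ≤ Σⱼ p(βⱼ) + (μ/2)‖β‖₂²` for every vector `β ∈ ℝ^d`. -/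
theorem amenable_l1_bound (lam mu : ℝ) (hlam : 0 < lam) (hmu : 0 ≤ mu)
    (p : ℝ → ℝ) (hp : IsAmenable lam mu p) (d : ℕ) (β : Fin d → ℝ) :
    lam * (∑ j, |β j|) ≤ (∑ j, p (β j)) + mu / 2 * (∑ j, (β j) ^ 2) :=
  amenable_l1_bound_general lam mu p hp d β
end

section
/- Let λ > 0, μ ≥ 0, and let p: ℝ → ℝ be μ-amenable with parameter λ. Then the function t ↦ λ|t| − p(t) is differentiable at 0 with derivative 0 (hence, since p is differentiable away from 0, the map β ↦ λ‖β‖₁ − Σ_j p(β_j) is everywhere differentiable). -/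
open Set

theorem continuous_of_convexOn_add_mul_sq {p : ℝ → ℝ} {c : ℝ}
    (h : ConvexOn ℝ univ (fun t => p t + c * t ^ 2)) : Continuous p := by
  have hq : Continuous (fun t => p t + c * t ^ 2) :=
    continuousOn_univ.mp (h.continuousOn isOpen_univ)
  have hsq : Continuous fun t : ℝ => c * t ^ 2 := continuous_const.mul (continuous_pow 2)
  simpa using hq.fun_sub hsq

theorem hasDerivWithinAt_abs_Ici_zero : HasDerivWithinAt (fun t : ℝ => |t|) 1 (Ici 0) 0 :=
  (hasDerivWithinAt_id 0 (Ici 0)).congr (fun _ ht => abs_of_nonneg ht) abs_zero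

theorem HasDerivWithinAt.hasDerivAt_zero_of_even {E : Type*} [NormedAddCommGroup E]
    [NormedSpace ℝ E] {g : ℝ → E} (heven : ∀ t, g (-t) = g t)
    (hg : HasDerivWithinAt g 0 (Ici 0) 0) : HasDerivAt g 0 0 := by
  have hneg : HasDerivWithinAt (fun t => g (-t)) ((-1 : ℝ) • (0 : E)) (Iic 0) 0 := by
    refine HasDerivWithinAt.scomp (0 : ℝ) (by simpa using hg) (hasDerivWithinAt_neg 0 _) ?_
    exact fun t (ht : t ≤ 0) => show 0 ≤ -t from neg_nonneg.mpr ht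
  simp only [heven, smul_zero] at hneg
  rw [← hasDerivWithinAt_univ, ← Iic_union_Ici]
  exact hneg.union hg

namespace IsAmenable

variable {lam mu : ℝ} {p : ℝ → ℝ}

theorem hasDerivAt_mul_abs_sub_zero (hp : IsAmenable lam mu p) :
    HasDerivAt (fun t => lam * |t| - p t) 0 0 := by
  refine HasDerivWithinAt.hasDerivAt_zero_of_even (fun t => by rw [abs_neg, hp.1]) ?_
  simpa using (hasDerivWithinAt_abs_Ici_zero.const_mul lam).fun_sub hp.hasDerivWithinAt_Ici_zero

theorem differentiable_mul_abs_sub (hp : IsAmenable lam mu p) :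
    Differentiable ℝ (fun t => lam * |t| - p t) := by
  intro t
  rcases eq_or_ne t 0 with rfl | ht
  · exact hp.hasDerivAt_mul_abs_sub_zero.differentiableAt
  · exact ((differentiableAt_abs ht).const_mul lam).sub (hp.2.2.2.2.1 t ht)

end IsAmenable

theorem amenable_l1_minus_penalty_differentiable_general (lam mu : ℝ)
    (p : ℝ → ℝ) (hp : IsAmenable lam mu p) :
    HasDerivAt (fun t : ℝ => lam * |t| - p t) 0 0 ∧
    (∀ d : ℕ, Differentiable ℝ
      (fun β : Fin d → ℝ => lam * (∑ j, |β j|) - ∑ j, p (β j))) := by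
  refine ⟨hp.hasDerivAt_mul_abs_sub_zero, fun d => ?_⟩
  have hsum : (fun β : Fin d → ℝ => lam * (∑ j, |β j|) - ∑ j, p (β j))
      = fun β => ∑ j, (lam * |β j| - p (β j)) := by
    ext β
    rw [Finset.mul_sum, ← Finset.sum_sub_distrib]
  rw [hsum]
  exact Differentiable.fun_sum fun j _ =>
    hp.differentiable_mul_abs_sub.comp (differentiable_apply j)

/-- For a `μ`-amenable penalty `p`, the function `t ↦ λ|t| − p(t)` is differentiable
at `0` with derivative `0`; hence (since `p` is differentiable away from `0`) the map
`β ↦ λ‖β‖₁ − Σⱼ p(βⱼ)` is everywhere differentiable. -/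
theorem amenable_l1_minus_penalty_differentiable (lam mu : ℝ) (hlam : 0 < lam)
    (hmu : 0 ≤ mu) (p : ℝ → ℝ) (hp : IsAmenable lam mu p) :
    HasDerivAt (fun t : ℝ => lam * |t| - p t) 0 0 ∧
    (∀ d : ℕ, Differentiable ℝ
      (fun β : Fin d → ℝ => lam * (∑ j, |β j|) - ∑ j, p (β j))) :=
  amenable_l1_minus_penalty_differentiable_general lam mu p hp
end

section
/- Let λ > 0, μ ≥ 0, and let p: ℝ → ℝ be μ-amenable with parameter λ. Then the function t ↦ p(t) + (μ/2)t² − λ|t| is convex on ℝ. -/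
open Set Filter Topology

namespace ConvexOn

variable {f : ℝ → ℝ} {a l : ℝ}

/- The secant from `a` is a limit of secants from points `u ↓ a`, each of which bounds
`deriv f u` from above. -/
theorem le_slope_of_tendsto_deriv (hf : ConvexOn ℝ univ f)
    (hd : ∀ᶠ u in 𝓝[>] a, DifferentiableAt ℝ f u) (hl : Tendsto (deriv f) (𝓝[>] a) (𝓝 l))
    {x y : ℝ} (hax : a ≤ x) (hxy : x < y) : l ≤ slope f x y := by
  have hay : a < y := hax.trans_lt hxy
  have hc : Continuous f := continuousOn_univ.mp (hf.continuousOn isOpen_univ)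
  have h_secant_a : Tendsto (fun u => slope f u y) (𝓝[>] a) (𝓝 (slope f a y)) := by
    simp only [slope_def_field]
    exact ((continuousAt_const.sub hc.continuousAt).div (continuousAt_const.sub continuousAt_id)
      (sub_ne_zero.2 hay.ne')).tendsto.mono_left nhdsWithin_le_nhds
  calc l ≤ slope f a y := by
        refine le_of_tendsto_of_tendsto hl h_secant_a ?_
        filter_upwards [hd, Ioo_mem_nhdsGT hay] with u hud hu
        exact hf.deriv_le_slope trivial trivial hu.2 hud
    _ ≤ slope f x y := by
        rw [slope_comm, slope_comm f x]
        exact hf.slope_mono trivial ⟨trivial, hay.ne⟩ ⟨trivial, hxy.ne⟩ hax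

theorem monotoneOn_sub_mul_of_tendsto_deriv (hf : ConvexOn ℝ univ f)
    (hd : ∀ᶠ u in 𝓝[>] a, DifferentiableAt ℝ f u) (hl : Tendsto (deriv f) (𝓝[>] a) (𝓝 l)) :
    MonotoneOn (fun x => f x - l * x) (Ici a) := by
  intro x hx y _ hxy
  rcases hxy.eq_or_lt with rfl | hxy
  · rfl
  have h := hf.le_slope_of_tendsto_deriv hd hl hx hxy
  rw [slope_def_field, le_div_iff₀ (sub_pos.2 hxy)] at h
  linarith

theorem comp_abs (hf : ConvexOn ℝ (Ici 0) f) (hm : MonotoneOn f (Ici 0)) :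
    ConvexOn ℝ univ (fun x => f |x|) := by
  have himg : (fun x : ℝ => |x|) '' univ = Ici 0 := by
    ext x
    simpa using ⟨fun ⟨y, hy⟩ => hy ▸ abs_nonneg y, fun hx => ⟨x, abs_of_nonneg hx⟩⟩
  rw [← himg] at hf hm
  exact hf.comp convexOn_univ_norm hm

end ConvexOn

theorem Function.Even.apply_abs {β : Type*} {p : ℝ → β} (hp : p.Even) (t : ℝ) : p |t| = p t := by
  rcases abs_choice t with h | h <;> rw [h]
  exact hp t

theorem amenable_convexity_general (lam mu : ℝ)
    (p : ℝ → ℝ) (hp : IsAmenable lam mu p) :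
    ConvexOn ℝ Set.univ (fun t : ℝ => p t + mu / 2 * t ^ 2 - lam * |t|) := by
  obtain ⟨heven, -, -, -, hdiff, hlim, hconv⟩ := hp
  set g : ℝ → ℝ := fun t => p t + mu / 2 * t ^ 2
  have hg_deriv : ∀ t ≠ 0, HasDerivAt g (deriv p t + mu * t) t := fun t ht =>
    ((hdiff t ht).hasDerivAt.add ((hasDerivAt_pow 2 t).const_mul (mu / 2))).congr_deriv
      (by push_cast; ring)
  have hg_lim : Tendsto (deriv g) (𝓝[>] 0) (𝓝 lam) := by
    have h : Tendsto (fun t => deriv p t + mu * t) (𝓝[>] 0) (𝓝 (lam + mu * 0)) :=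
      hlim.add ((continuous_const_mul mu).tendsto 0 |>.mono_left nhdsWithin_le_nhds)
    rw [mul_zero, add_zero] at h
    refine h.congr' ?_
    filter_upwards [self_mem_nhdsWithin] with t ht
    exact (hg_deriv t (ne_of_gt ht)).deriv.symm
  have hg_diff : ∀ᶠ t in 𝓝[>] 0, DifferentiableAt ℝ g t := by
    filter_upwards [self_mem_nhdsWithin] with t ht
    exact (hg_deriv t (ne_of_gt ht)).differentiableAt
  have hF_conv : ConvexOn ℝ (Ici 0) (fun t => g t - lam * t) :=
    (hconv.subset (subset_univ _) (convex_Ici 0)).sub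
      ((lam • LinearMap.id : ℝ →ₗ[ℝ] ℝ).concaveOn (convex_Ici 0))
  convert (hF_conv.comp_abs (hconv.monotoneOn_sub_mul_of_tendsto_deriv hg_diff hg_lim)) using 2
  simp only [g, Function.Even.apply_abs heven, sq_abs]

/-- For a `μ`-amenable penalty `p` with parameter `λ`, the function
`t ↦ p(t) + (μ/2)t² − λ|t|` is convex on `ℝ`. -/
theorem amenable_convexity (lam mu : ℝ) (hlam : 0 < lam) (hmu : 0 ≤ mu)
    (p : ℝ → ℝ) (hp : IsAmenable lam mu p) :
    ConvexOn ℝ Set.univ (fun t : ℝ => p t + mu / 2 * t ^ 2 - lam * |t|) :=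
  amenable_convexity_general lam mu p hp
end

section
/- Let n ≥ 1, let X be an n×p real matrix, fix j ∈ {1,…,p}, and let φ, g ∈ ℝ^p with φ_j = 0 and g_j = 0. Set r = X(e_j − φ) ∈ ℝⁿ, and suppose the node-wise first-order (KKT) conditions (1/n)(Xᵀr)_k = g_k hold for every k ≠ j. Define τ² = (1/n)(Xᵀr)_j and assume τ² ≠ 0. Then: (a) τ² = (1/n)‖r‖₂² + ⟨φ, g⟩; and (b) with Θ_j := (1/τ²)(e_j − φ) and Σ̂ := (1/n)XᵀX, the vector Σ̂Θ_j − e_j has j-th coordinate 0 and k-th coordinate g_k/τ² for k ≠ j, so that ‖Σ̂Θ_j − e_j‖_∞ = ‖g‖_∞/|τ²|. -/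
open Matrix

/-!
Write `s = (1/n) Xᵀ r` for the scaled gradient of the least-squares loss. The KKT conditions say
that `s` agrees with `g` off `j`, and `g_j = 0`, so `s = g + τ² e_j`. Both parts follow from this
single identity: pairing it with `e_j − φ` and using `s ⬝ (e_j − φ) = (1/n)‖r‖²` gives (a), and
`Σ̂ Θ_j = s / τ²` turns it into `Σ̂ Θ_j − e_j = g / τ²`, which is (b).
-/

theorem Pi.eq_add_single_of_forall_ne {ι M : Type*} [DecidableEq ι] [AddCommMonoid M]
    {f g : ι → M} {j : ι} (h : ∀ k, k ≠ j → f k = g k) (hgj : g j = 0) :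
    f = g + Pi.single j (f j) := by
  ext k
  by_cases hk : k = j
  · subst hk; simp [hgj]
  · simp [hk, h k hk]

section

variable {R m ι : Type*} [CommRing R] [Fintype m] [Fintype ι]

theorem Matrix.mulVec_dotProduct_mulVec_self (X : Matrix m ι R) (v : ι → R) :
    (X *ᵥ v) ⬝ᵥ (X *ᵥ v) = (Xᵀ *ᵥ (X *ᵥ v)) ⬝ᵥ v := by
  rw [dotProduct_mulVec, mulVec_transpose]

theorem Matrix.add_single_dotProduct_single_sub [DecidableEq ι] {g φ : ι → R} {j : ι}
    (hgj : g j = 0) (hφj : φ j = 0) (c : R) :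
    (g + Pi.single j c) ⬝ᵥ (Pi.single j 1 - φ) = c - φ ⬝ᵥ g := by
  simp [dotProduct_sub, add_dotProduct, single_dotProduct, dotProduct_single, hgj, hφj,
    dotProduct_comm g φ]

end

theorem Real.iSup_abs_mul_left {ι : Type*} (c : ℝ) (f : ι → ℝ) :
    ⨆ k, |c * f k| = |c| * ⨆ k, |f k| := by
  simp only [abs_mul]
  exact (Real.mul_iSup_of_nonneg (abs_nonneg c) _).symm

theorem nodewise_kkt_general (n p : ℕ)
    (X : Matrix (Fin n) (Fin p) ℝ) (j : Fin p) (φ g : Fin p → ℝ)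
    (hφj : φ j = 0) (hgj : g j = 0)
    (r : Fin n → ℝ) (hr : r = X *ᵥ (Pi.single j 1 - φ))
    (hkkt : ∀ k : Fin p, k ≠ j → (n : ℝ)⁻¹ * (Xᵀ *ᵥ r) k = g k)
    (τsq : ℝ) (hτsq : τsq = (n : ℝ)⁻¹ * (Xᵀ *ᵥ r) j) (hτne : τsq ≠ 0)
    (Θj w : Fin p → ℝ)
    (hΘj : Θj = τsq⁻¹ • (Pi.single j 1 - φ))
    (hw : w = ((n : ℝ)⁻¹ • (Xᵀ * X)) *ᵥ Θj - Pi.single j 1) :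
    τsq = (n : ℝ)⁻¹ * (∑ i, (r i) ^ 2) + (∑ k, φ k * g k) ∧
    w j = 0 ∧
    (∀ k : Fin p, k ≠ j → w k = g k / τsq) ∧
    (⨆ k, |w k|) = (⨆ k, |g k|) / |τsq| := by
  set s : Fin p → ℝ := (n : ℝ)⁻¹ • (Xᵀ *ᵥ r) with hs_def
  have hs : s = g + Pi.single j τsq := by
    rw [hτsq]
    exact Pi.eq_add_single_of_forall_ne hkkt hgj
  have hsr : s ⬝ᵥ (Pi.single j 1 - φ) = (n : ℝ)⁻¹ * ∑ i, r i ^ 2 := by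
    simp only [hs_def, smul_dotProduct, smul_eq_mul, sq]
    rw [hr, ← mulVec_dotProduct_mulVec_self, dotProduct]
  have hwg : w = τsq⁻¹ • g := by
    have hcovΘ : ((n : ℝ)⁻¹ • (Xᵀ * X)) *ᵥ Θj = τsq⁻¹ • s := by
      rw [hΘj, hs_def, hr, smul_mulVec, mulVec_smul, ← mulVec_mulVec, smul_comm]
    rw [hw, hcovΘ, hs, smul_add, ← Pi.single_smul', smul_eq_mul, inv_mul_cancel₀ hτne,
      add_sub_cancel_right]
  refine ⟨?_, by simp [hwg, hgj], fun k _ => by simp [hwg, div_eq_inv_mul], ?_⟩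
  · rw [← hsr, hs, add_single_dotProduct_single_sub hgj hφj, dotProduct]
    ring
  · simp only [hwg, Pi.smul_apply, smul_eq_mul, Real.iSup_abs_mul_left, abs_inv]
    rw [inv_mul_eq_div]

/-- Node-wise KKT identities: if `r = X(e_j − φ)` with `φ_j = 0`, `g_j = 0`,
`(Xᵀr)_k/n = g_k` for `k ≠ j`, and `τ² = (Xᵀr)_j/n ≠ 0`, then
(a) `τ² = ‖r‖₂²/n + ⟨φ, g⟩`; and (b) with `Θ_j = (e_j − φ)/τ²` and `Σ̂ = XᵀX/n`,
the vector `Σ̂Θ_j − e_j` has `j`-th coordinate `0` and `k`-th coordinate `g_k/τ²`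
for `k ≠ j`, so `‖Σ̂Θ_j − e_j‖_∞ = ‖g‖_∞/|τ²|`. -/
theorem nodewise_kkt (n p : ℕ) (hn : 1 ≤ n)
    (X : Matrix (Fin n) (Fin p) ℝ) (j : Fin p) (φ g : Fin p → ℝ)
    (hφj : φ j = 0) (hgj : g j = 0)
    (r : Fin n → ℝ) (hr : r = X *ᵥ (Pi.single j 1 - φ))
    (hkkt : ∀ k : Fin p, k ≠ j → (n : ℝ)⁻¹ * (Xᵀ *ᵥ r) k = g k)
    (τsq : ℝ) (hτsq : τsq = (n : ℝ)⁻¹ * (Xᵀ *ᵥ r) j) (hτne : τsq ≠ 0)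
    (Θj w : Fin p → ℝ)
    (hΘj : Θj = τsq⁻¹ • (Pi.single j 1 - φ))
    (hw : w = ((n : ℝ)⁻¹ • (Xᵀ * X)) *ᵥ Θj - Pi.single j 1) :
    τsq = (n : ℝ)⁻¹ * (∑ i, (r i) ^ 2) + (∑ k, φ k * g k) ∧
    w j = 0 ∧
    (∀ k : Fin p, k ≠ j → w k = g k / τsq) ∧
    (⨆ k, |w k|) = (⨆ k, |g k|) / |τsq| :=
  nodewise_kkt_general n p X j φ g hφj hgj r hr hkkt τsq hτsq hτne Θj w hΘj hw
end
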